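/- Let f : ℂ → ℂ be analytic on a neighborhood of p, and suppose f'(w) = (w − p)^m · u(w) near p, where m ≥ 1 is a natural number and u is analytic at p with u(p) ≠ 0. Then the Schwarzian derivative S f is analytic on a punctured neighborhood of p, and (w − p)²·S f(w) tends to −m·(m+2)/2 as w → p through w ≠ p. In particular (since −m·(m+2)/2 ≠ 0), S f has a pole of order exactly 2 at p. -/

import Mathlib

/-!
Write `f' = t^(k+1) u` with `t = w - p`. Then `f'' = t^k a` with `a = (k+1) u + t u'` and
`f''' = k t^(k-1) a + t^k a'`, so that off `p`
`t² S f = k a/u + t a'/u - (3/2) (a/u)²`.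
The right-hand side is analytic at `p`, with value `k (k+1) - (3/2) (k+1)² = -(k+1)(k+3)/2`.
-/

open Filter

/-- The Schwarzian derivative `S f (z) = f'''(z)/f'(z) − (3/2)·(f''(z)/f'(z))²`. -/
noncomputable def schwarzian (f : ℂ → ℂ) (z : ℂ) : ℂ :=
  deriv (deriv (deriv f)) z / deriv f z - (3 / 2) * (deriv (deriv f) z / deriv f z) ^ 2

open Topology

section

variable {𝕜 : Type*} [NontriviallyNormedField 𝕜]

theorem deriv_sub_pow_mul {v : 𝕜 → 𝕜} {c x : 𝕜} (n : ℕ)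
    (hv : DifferentiableAt 𝕜 v x) :
    deriv (fun z => (z - c) ^ n * v z) x =
      n * (x - c) ^ (n - 1) * v x + (x - c) ^ n * deriv v x := by
  rw [deriv_fun_mul (by fun_prop) hv, deriv_comp_sub_const (f := fun z => z ^ n),
    deriv_pow_field]

theorem deriv_deriv_eventuallyEq_of_deriv_eventuallyEq {f u : 𝕜 → 𝕜} {p : 𝕜} {k : ℕ}
    (hu : ∀ᶠ w in 𝓝 p, DifferentiableAt 𝕜 u w)
    (hfac : deriv f =ᶠ[𝓝 p] fun w => (w - p) ^ (k + 1) * u w) :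
    deriv (deriv f) =ᶠ[𝓝 p] fun w => (w - p) ^ k * ((k + 1) * u w + (w - p) * deriv u w) := by
  refine hfac.deriv.trans ?_
  filter_upwards [hu] with w hw
  rw [deriv_sub_pow_mul _ hw]
  push_cast
  ring

end

theorem analyticAt_schwarzian {f : ℂ → ℂ} {w : ℂ} (hf : AnalyticAt ℂ (deriv f) w)
    (hw : deriv f w ≠ 0) : AnalyticAt ℂ (schwarzian f) w := by
  unfold schwarzian
  fun_prop (disch := exact hw)

theorem sub_sq_mul_schwarzian_eq {f : ℂ → ℂ} {p w a b c : ℂ} {k : ℕ}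
    (hw : w ≠ p) (hc : c ≠ 0)
    (h1 : deriv f w = (w - p) ^ (k + 1) * c) (h2 : deriv (deriv f) w = (w - p) ^ k * a)
    (h3 : deriv (deriv (deriv f)) w = k * (w - p) ^ (k - 1) * a + (w - p) ^ k * b) :
    (w - p) ^ 2 * schwarzian f w = k * (a / c) + (w - p) * (b / c) - 3 / 2 * (a / c) ^ 2 := by
  have ht : w - p ≠ 0 := sub_ne_zero.2 hw
  rw [schwarzian, h1, h2, h3]
  rcases k with _ | k
  · field_simp
    ring
  · simp only [Nat.add_sub_cancel, pow_succ]
    field_simp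

section

variable {f u : ℂ → ℂ} {p : ℂ}

theorem eventually_analyticAt_schwarzian {m : ℕ} (hu : AnalyticAt ℂ u p) (hup : u p ≠ 0)
    (hfac : deriv f =ᶠ[𝓝 p] fun w => (w - p) ^ m * u w) :
    ∀ᶠ w in 𝓝[≠] p, AnalyticAt ℂ (schwarzian f) w := by
  have hf' : AnalyticAt ℂ (deriv f) p :=
    (by fun_prop : AnalyticAt ℂ (fun w => (w - p) ^ m * u w) p).congr hfac.symm
  rw [eventually_nhdsWithin_iff]
  filter_upwards [hf'.eventually_analyticAt, hfac, hu.continuousAt.eventually_ne hup]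
    with w hf'w hfw huw hwp
  refine analyticAt_schwarzian hf'w ?_
  rw [hfw]
  exact mul_ne_zero (pow_ne_zero _ (sub_ne_zero.2 hwp)) huw

theorem tendsto_sub_sq_mul_schwarzian {k : ℕ} (hu : AnalyticAt ℂ u p) (hup : u p ≠ 0)
    (hfac : deriv f =ᶠ[𝓝 p] fun w => (w - p) ^ (k + 1) * u w) :
    Tendsto (fun w => (w - p) ^ 2 * schwarzian f w) (𝓝[≠] p)
      (𝓝 (-((k + 1) * (k + 3)) / 2)) := by
  set a : ℂ → ℂ := fun w => (k + 1) * u w + (w - p) * deriv u w with ha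
  have h2 : deriv (deriv f) =ᶠ[𝓝 p] fun w => (w - p) ^ k * a w :=
    deriv_deriv_eventuallyEq_of_deriv_eventuallyEq
      (hu.eventually_analyticAt.mono fun _ hw => hw.differentiableAt) hfac
  have h3 : deriv (deriv (deriv f)) =ᶠ[𝓝 p]
      fun w => k * (w - p) ^ (k - 1) * a w + (w - p) ^ k * deriv a w := by
    refine h2.deriv.trans ?_
    filter_upwards [hu.eventually_analyticAt] with w hw
    exact deriv_sub_pow_mul _ (by fun_prop)
  set F : ℂ → ℂ := fun w =>
    k * (a w / u w) + (w - p) * (deriv a w / u w) - 3 / 2 * (a w / u w) ^ 2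
  have hF : ContinuousAt F p :=
    (by fun_prop (disch := exact hup) : AnalyticAt ℂ F p).continuousAt
  have hFp : F p = -((k + 1) * (k + 3)) / 2 := by
    simp only [F, ha, sub_self, zero_mul, add_zero, mul_div_assoc, div_self hup]
    ring
  have heq : F =ᶠ[𝓝[≠] p] fun w => (w - p) ^ 2 * schwarzian f w := by
    rw [EventuallyEq, eventually_nhdsWithin_iff]
    filter_upwards [hfac, h2, h3, hu.continuousAt.eventually_ne hup] with w h1w h2w h3w huw hwp
    exact (sub_sq_mul_schwarzian_eq hwp huw h1w h2w h3w).symm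
  exact hFp ▸ hF.continuousWithinAt.tendsto.congr' heq

end

theorem schwarzian_double_pole_at_ramification
    (f u : ℂ → ℂ) (p : ℂ) (m : ℕ) (hm : 1 ≤ m)
    (hu : AnalyticAt ℂ u p) (hup : u p ≠ 0)
    (hfac : ∀ᶠ w in nhds p, deriv f w = (w - p) ^ m * u w) :
    (∀ᶠ w in nhdsWithin p {p}ᶜ, AnalyticAt ℂ (schwarzian f) w) ∧
    Tendsto (fun w => (w - p) ^ 2 * schwarzian f w) (nhdsWithin p {p}ᶜ)
      (nhds (-((m : ℂ) * ((m : ℂ) + 2)) / 2)) := by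
  obtain ⟨k, rfl⟩ := Nat.exists_eq_add_of_le' hm
  refine ⟨eventually_analyticAt_schwarzian hu hup hfac, ?_⟩
  convert tendsto_sub_sq_mul_schwarzian hu hup hfac using 3
  push_cast
  ring
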